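/- arXiv:2302.05430 — 3 statements merged into one kernel-verified Lean document; each statement's English description precedes it below -/
import Mathlib

section
/- Let Θ ⊂ ℝ^d with ℓ∞-diameter at most D. Fix cumulative losses L̃_{τ−1}, L̃_τ = L̃_{τ−1} + ℓ̃_τ on Θ. Let ξ, ξ' ∈ ℝ^d and let θ̃_τ, θ̃'_τ be γ-approximate minimizers of L̃_{τ−1}(·) − η⟨ξ, ·⟩ and L̃_{τ−1}(·) − η⟨ξ', ·⟩, and θ̃_{τ+1}, θ̃'_{τ+1} be γ-approximate minimizers of L̃_τ(·) − η⟨ξ, ·⟩ and L̃_τ(·) − η⟨ξ', ·⟩. Then min(⟨θ̃'_τ, ξ'−ξ⟩, ⟨θ̃'_{τ+1}, ξ'−ξ⟩) ≥ max(⟨θ̃_τ, ξ'−ξ⟩, ⟨θ̃_{τ+1}, ξ'−ξ⟩) − (2(γ(ξ) + γ(ξ')) + |ℓ̃_τ(θ̃_τ) − ℓ̃_τ(θ̃_{τ+1})|)/η. -/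
open Finset

/-- Second monotonicity lemma for approximate FTPL iterates: with cumulative losses
`L̃_{τ-1}` and `L̃_τ = L̃_{τ-1} + ℓ̃_τ`, and `γ`-approximate minimizers
`θ̃_τ, θ̃'_τ` (resp. `θ̃_{τ+1}, θ̃'_{τ+1}`) of the perturbed losses with perturbations
`ξ, ξ'`, the inner products with `ξ' − ξ` satisfy the stated min/max inequality. -/
theorem ftpl_monotonicity_two
    {d : ℕ} (Θ : Set (Fin d → ℝ)) (D : ℝ)
    (hdiam : ∀ θ ∈ Θ, ∀ θ' ∈ Θ, ∀ i, |θ i - θ' i| ≤ D)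
    (Lprev ℓtil : (Fin d → ℝ) → ℝ)
    (γ : (Fin d → ℝ) → ℝ) (hγ : ∀ ζ, 0 ≤ γ ζ) (η : ℝ) (hη : 0 < η)
    (ξ ξ' θτ θτ' θnext θnext' : Fin d → ℝ)
    (hθτ : θτ ∈ Θ) (hθτ' : θτ' ∈ Θ) (hθnext : θnext ∈ Θ) (hθnext' : θnext' ∈ Θ)
    -- θ̃_τ is a γ(ξ)-approximate minimizer of L̃_{τ-1}(·) − η⟨ξ,·⟩
    (hτ : ∀ ϑ ∈ Θ,
      Lprev θτ - η * (∑ i, ξ i * θτ i) ≤ γ ξ + (Lprev ϑ - η * (∑ i, ξ i * ϑ i)))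
    -- θ̃'_τ is a γ(ξ')-approximate minimizer of L̃_{τ-1}(·) − η⟨ξ',·⟩
    (hτ' : ∀ ϑ ∈ Θ,
      Lprev θτ' - η * (∑ i, ξ' i * θτ' i) ≤ γ ξ' + (Lprev ϑ - η * (∑ i, ξ' i * ϑ i)))
    -- θ̃_{τ+1} is a γ(ξ)-approximate minimizer of L̃_τ(·) − η⟨ξ,·⟩
    (hnext : ∀ ϑ ∈ Θ,
      (Lprev θnext + ℓtil θnext) - η * (∑ i, ξ i * θnext i)
        ≤ γ ξ + ((Lprev ϑ + ℓtil ϑ) - η * (∑ i, ξ i * ϑ i)))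
    -- θ̃'_{τ+1} is a γ(ξ')-approximate minimizer of L̃_τ(·) − η⟨ξ',·⟩
    (hnext' : ∀ ϑ ∈ Θ,
      (Lprev θnext' + ℓtil θnext') - η * (∑ i, ξ' i * θnext' i)
        ≤ γ ξ' + ((Lprev ϑ + ℓtil ϑ) - η * (∑ i, ξ' i * ϑ i))) :
    min (∑ i, θτ' i * (ξ' i - ξ i)) (∑ i, θnext' i * (ξ' i - ξ i))
      ≥ max (∑ i, θτ i * (ξ' i - ξ i)) (∑ i, θnext i * (ξ' i - ξ i))
        - (2 * (γ ξ + γ ξ') + |ℓtil θτ - ℓtil θnext|) / η := by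
  have e : ∀ θ : Fin d → ℝ,
      (∑ i, θ i * (ξ' i - ξ i)) = (∑ i, ξ' i * θ i) - (∑ i, ξ i * θ i) := by
    intro θ
    rw [← Finset.sum_sub_distrib]
    exact Finset.sum_congr rfl fun i _ => by ring
  set B := 2 * (γ ξ + γ ξ') + |ℓtil θτ - ℓtil θnext| with hBdef
  have habs1 := le_abs_self (ℓtil θτ - ℓtil θnext)
  have habs2 := neg_abs_le (ℓtil θτ - ℓtil θnext)
  have hγξ := hγ ξ
  have hγξ' := hγ ξ'
  have key : ∀ a b : ℝ, η * a ≤ η * b + B → a ≤ b + B / η := by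
    intro a b h
    have h2 : η * a ≤ η * (b + B / η) := by
      rw [mul_add, mul_div_cancel₀ _ (ne_of_gt hη)]; linarith
    exact le_of_mul_le_mul_left h2 hη
  rw [ge_iff_le]
  refine le_min ?_ ?_ <;> rw [sub_le_iff_le_add] <;> refine max_le ?_ ?_ <;>
    rw [e, e] <;> apply key
  · -- θτ vs θτ'
    have h1 := hτ θτ' hθτ'
    have h2 := hτ' θτ hθτ
    nlinarith [h1, h2]
  · -- θnext vs θτ'
    have h1 := hτ' θnext hθnext
    have h2 := hτ θτ' hθτ'
    have h3 := hnext θτ hθτ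
    nlinarith [h1, h2, h3]
  · -- θτ vs θnext'
    have h1 := hnext' θτ hθτ
    have h2 := hnext θnext' hθnext'
    have h3 := hτ θnext hθnext
    nlinarith [h1, h2, h3]
  · -- θnext vs θnext'
    have h1 := hnext θnext' hθnext'
    have h2 := hnext' θnext hθnext
    nlinarith [h1, h2]
end

section
/- In the tournament setting with polynomial boundaries: let Θ_d parameterize tuples of (K choose 2) degree-r polynomials f_{w_{kk'}} on ℝ^d with coeff_r(f_{w_{kk'}}) = 1, define φ̄(θ_d, k, k', z) = f_{w_{kk'}}(z), and let k̄ be the tournament winner. If z ∼ ν is σ_poly^{(r)}-polynomially smooth with ‖z‖∞ ≤ B a.s. (B ≥ 1), then P( k̄(θ_d, z) ≠ k̄(θ'_d, z) ) ≤ (B/σ_poly^{(r)}) Σ_{k≠k'} ‖w_{kk'} − w'_{kk'}‖₁^{1/r}. -/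
open MeasureTheory Finset

/-- The smallest index attaining the maximum score: the tournament winner with
lexicographic tie-breaking. -/
noncomputable def tournamentWinner {K : ℕ} [NeZero K] (score : Fin K → ℕ) : Fin K :=
  (Finset.univ.filter fun k => ∀ k', score k' ≤ score k).min' (by
    obtain ⟨k, -, hk⟩ := Finset.exists_max_image Finset.univ score
      ⟨⟨0, Nat.pos_of_ne_zero (NeZero.ne K)⟩, Finset.mem_univ _⟩
    exact ⟨k, Finset.mem_filter.2 ⟨Finset.mem_univ _, fun k' => hk k' (Finset.mem_univ _)⟩⟩)

/-- The number of matches won by mode `k` in the tournament with polynomial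
pairwise comparisons `f_{w_{kk'}}(z) ≥ 0`. -/
noncomputable def polyScore {K d : ℕ}
    (W : Fin K → Fin K → MvPolynomial (Fin d) ℝ) (z : Fin d → ℝ) (k : Fin K) : ℕ :=
  (Finset.univ.filter fun k' : Fin K =>
    k' ≠ k ∧ 0 ≤ MvPolynomial.eval z (W k k')).card

/-- The Euclidean norm of the vector of top-degree (degree-`r`) coefficients. -/
noncomputable def topCoeffNorm {d : ℕ} (r : ℕ) (f : MvPolynomial (Fin d) ℝ) : ℝ :=
  Real.sqrt (∑ I ∈ f.support.filter (fun I => (I.sum fun _ e => e) = r),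
    (MvPolynomial.coeff I f) ^ 2)

/-- The ℓ₁ distance between the coefficient vectors of two polynomials. -/
noncomputable def coeffL1Dist {d : ℕ} (f g : MvPolynomial (Fin d) ℝ) : ℝ :=
  ∑ I ∈ f.support ∪ g.support, |MvPolynomial.coeff I f - MvPolynomial.coeff I g|

/-- `σ`-polynomial smoothness of order `r`. -/
def PolySmooth {d : ℕ} (r : ℕ) (σ : ℝ) (ν : Measure (Fin d → ℝ)) : Prop :=
  ∀ f : MvPolynomial (Fin d) ℝ, f.totalDegree ≤ r → topCoeffNorm r f = 1 →
    ∀ a ε : ℝ, 0 < ε →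
      (ν {z | |MvPolynomial.eval z f - a| ≤ ε}).toReal ≤ ε ^ ((1 : ℝ) / r) / σ

lemma coeffL1Dist_nonneg {d : ℕ} (f g : MvPolynomial (Fin d) ℝ) :
    0 ≤ coeffL1Dist f g :=
  Finset.sum_nonneg fun _ _ => abs_nonneg _

lemma coeffL1Dist_eq_zero {d : ℕ} {f g : MvPolynomial (Fin d) ℝ}
    (h : coeffL1Dist f g = 0) : f = g := by
  have h' : ∀ I ∈ f.support ∪ g.support,
      |MvPolynomial.coeff I f - MvPolynomial.coeff I g| = 0 :=
    (Finset.sum_eq_zero_iff_of_nonneg fun _ _ => abs_nonneg _).mp h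
  apply MvPolynomial.ext
  intro I
  by_cases hI : I ∈ f.support ∪ g.support
  · have := h' I hI
    rw [abs_eq_zero, sub_eq_zero] at this
    exact this
  · rw [Finset.mem_union, not_or] at hI
    rw [MvPolynomial.notMem_support_iff.mp hI.1, MvPolynomial.notMem_support_iff.mp hI.2]

lemma eval_sub_abs_le {d : ℕ} (r : ℕ) (B : ℝ) (hB : 1 ≤ B)
    (f g : MvPolynomial (Fin d) ℝ) (hf : f.totalDegree ≤ r) (hg : g.totalDegree ≤ r)
    (z : Fin d → ℝ) (hz : ∀ j, |z j| ≤ B) :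
    |MvPolynomial.eval z f - MvPolynomial.eval z g| ≤ coeffL1Dist f g * B ^ r := by
  have h0 : (0:ℝ) ≤ B := le_trans zero_le_one hB
  have hmono : ∀ I : Fin d →₀ ℕ, (I.sum fun _ e => e) ≤ r →
      |∏ j, z j ^ I j| ≤ B ^ r := by
    intro I hI
    rw [Finset.abs_prod]
    calc ∏ j, |z j ^ I j| ≤ ∏ j, B ^ I j := by
          apply Finset.prod_le_prod (fun j _ => abs_nonneg _)
          intro j _
          rw [abs_pow]
          exact pow_le_pow_left₀ (abs_nonneg _) (hz j) _
      _ = B ^ (∑ j, I j) := by rw [Finset.prod_pow_eq_pow_sum]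
      _ ≤ B ^ r := by
          apply pow_le_pow_right₀ hB
          rwa [Finsupp.sum_fintype _ _ (fun _ => rfl)] at hI
  have hev : ∀ p : MvPolynomial (Fin d) ℝ, p.support ⊆ f.support ∪ g.support →
      MvPolynomial.eval z p = ∑ I ∈ f.support ∪ g.support,
        MvPolynomial.coeff I p * ∏ j, z j ^ I j := by
    intro p hp
    rw [MvPolynomial.eval_eq']
    apply Finset.sum_subset hp
    intro I _ hI
    rw [MvPolynomial.notMem_support_iff.mp hI, zero_mul]
  have hkey : MvPolynomial.eval z f - MvPolynomial.eval z g
      = ∑ I ∈ f.support ∪ g.support,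
          (MvPolynomial.coeff I f - MvPolynomial.coeff I g) * ∏ j, z j ^ I j := by
    rw [hev f Finset.subset_union_left, hev g Finset.subset_union_right,
      ← Finset.sum_sub_distrib]
    exact Finset.sum_congr rfl fun I _ => (sub_mul _ _ _).symm
  rw [hkey, coeffL1Dist, Finset.sum_mul]
  calc |∑ I ∈ f.support ∪ g.support,
          (MvPolynomial.coeff I f - MvPolynomial.coeff I g) * ∏ j, z j ^ I j|
      ≤ ∑ I ∈ f.support ∪ g.support,
          |(MvPolynomial.coeff I f - MvPolynomial.coeff I g) * ∏ j, z j ^ I j| :=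
        Finset.abs_sum_le_sum_abs _ _
    _ ≤ ∑ I ∈ f.support ∪ g.support,
          |MvPolynomial.coeff I f - MvPolynomial.coeff I g| * B ^ r := by
        apply Finset.sum_le_sum
        intro I hI
        rw [abs_mul]
        apply mul_le_mul_of_nonneg_left _ (abs_nonneg _)
        apply hmono
        rcases Finset.mem_union.mp hI with h | h
        · exact le_trans (MvPolynomial.le_totalDegree h) hf
        · exact le_trans (MvPolynomial.le_totalDegree h) hg

/-- Winner-flip probability for the tournament with polynomial boundaries: if
`z ∼ ν` is `σ_poly`-polynomially smooth with `‖z‖∞ ≤ B` a.s. (`B ≥ 1`), the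
comparison polynomials are antisymmetric, of degree at most `r`, with unit
top-coefficient norm, then
`P(k̄(θ_d,z) ≠ k̄(θ'_d,z)) ≤ (B/σ_poly) Σ_{k≠k'} ‖w_{kk'} − w'_{kk'}‖₁^{1/r}`. -/
theorem poly_tournament_winner_flip_probability
    {K d : ℕ} [NeZero K] (r : ℕ) (hr : 0 < r) (σpoly B : ℝ) (hσ : 0 < σpoly) (hB : 1 ≤ B)
    (W W' : Fin K → Fin K → MvPolynomial (Fin d) ℝ)
    (hWdeg : ∀ k k', (W k k').totalDegree ≤ r)
    (hW'deg : ∀ k k', (W' k k').totalDegree ≤ r)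
    (hWcoeff : ∀ k k', k ≠ k' → topCoeffNorm r (W k k') = 1)
    (hW'coeff : ∀ k k', k ≠ k' → topCoeffNorm r (W' k k') = 1)
    (hWanti : ∀ k k', W k' k = -W k k') (hW'anti : ∀ k k', W' k' k = -W' k k')
    (ν : Measure (Fin d → ℝ)) [IsProbabilityMeasure ν]
    (hsmooth : PolySmooth r σpoly ν)
    (hbound : ∀ᵐ z ∂ν, ∀ j, |z j| ≤ B) :
    (ν {z | tournamentWinner (polyScore W z) ≠ tournamentWinner (polyScore W' z)}).toReal
      ≤ (B / σpoly) *
          ∑ p ∈ Finset.univ.offDiag (α := Fin K),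
            (coeffL1Dist (W p.1 p.2) (W' p.1 p.2)) ^ ((1 : ℝ) / r) := by
  classical
  set S := Finset.univ.offDiag (α := Fin K) with hS
  set G : Set (Fin d → ℝ) := {z | ∀ j, |z j| ≤ B} with hG
  set E : Fin K × Fin K → Set (Fin d → ℝ) := fun p =>
    G ∩ {z | ¬((0 ≤ MvPolynomial.eval z (W p.1 p.2)) ↔
        (0 ≤ MvPolynomial.eval z (W' p.1 p.2)))} with hE
  -- inclusion into the union of pairwise sign-flip events
  have hsub : {z | tournamentWinner (polyScore W z) ≠ tournamentWinner (polyScore W' z)}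
      ⊆ (⋃ p ∈ S, E p) ∪ Gᶜ := by
    intro z hz
    by_cases hzG : z ∈ G
    · left
      by_contra hnot
      simp only [Set.mem_iUnion, not_exists] at hnot
      apply hz
      have hsc : polyScore W z = polyScore W' z := by
        funext k
        unfold polyScore
        congr 1
        apply Finset.filter_congr
        intro k' _
        by_cases hkk : k' = k
        · simp [hkk]
        · have hp : (k, k') ∈ S := Finset.mem_offDiag.mpr
            ⟨Finset.mem_univ _, Finset.mem_univ _, Ne.symm hkk⟩
          have hne := hnot (k, k') hp
          rw [hE] at hne
          simp only [Set.mem_inter_iff, Set.mem_setOf_eq, not_and, not_not] at hne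
          have hiff := hne hzG
          constructor
          · rintro ⟨h1, h2⟩; exact ⟨h1, hiff.mp h2⟩
          · rintro ⟨h1, h2⟩; exact ⟨h1, hiff.mpr h2⟩
      rw [hsc]
    · right; exact hzG
  have hGc : ν Gᶜ = 0 := by
    rw [← Set.compl_setOf] at *
    exact hbound
  -- measure bound in ℝ≥0∞
  have hmeas : ν {z | tournamentWinner (polyScore W z) ≠ tournamentWinner (polyScore W' z)}
      ≤ ∑ p ∈ S, ν (E p) := by
    calc ν {z | tournamentWinner (polyScore W z) ≠ tournamentWinner (polyScore W' z)}
        ≤ ν ((⋃ p ∈ S, E p) ∪ Gᶜ) := measure_mono hsub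
      _ ≤ ν (⋃ p ∈ S, E p) + ν Gᶜ := measure_union_le _ _
      _ = ν (⋃ p ∈ S, E p) := by rw [hGc, add_zero]
      _ ≤ ∑ p ∈ S, ν (E p) := measure_biUnion_finset_le _ _
  -- per-pair bound
  have hpair : ∀ p ∈ S, (ν (E p)).toReal ≤
      (B / σpoly) * (coeffL1Dist (W p.1 p.2) (W' p.1 p.2)) ^ ((1 : ℝ) / r) := by
    rintro ⟨k, k'⟩ hp
    have hkk' : k ≠ k' := (Finset.mem_offDiag.mp hp).2.2
    set f := W k k' with hf
    set g := W' k k' with hg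
    set L := coeffL1Dist f g with hL
    rcases eq_or_lt_of_le (coeffL1Dist_nonneg f g) with hL0 | hL0
    · -- L = 0 : f = g, event empty
      have hfg : f = g := coeffL1Dist_eq_zero hL0.symm
      have hE0 : E (k, k') = ∅ := by
        rw [hE]
        ext z
        simp only [Set.mem_inter_iff, Set.mem_setOf_eq, Set.mem_empty_iff_false, iff_false,
          not_and, not_not]
        intro _
        rw [show W k k' = W' k k' from hfg]
      rw [hE0, measure_empty]
      simp only [ENNReal.toReal_zero]
      have hLz : L = 0 := hL0.symm
      rw [hLz, Real.zero_rpow (by positivity), mul_zero]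
    · -- L > 0
      have hB0 : (0:ℝ) < B := lt_of_lt_of_le one_pos hB
      set ε := L * B ^ r with hε
      have hεpos : 0 < ε := mul_pos hL0 (pow_pos hB0 r)
      have hsub2 : E (k, k') ⊆ {z | |MvPolynomial.eval z f - 0| ≤ ε} := by
        rintro z ⟨hzG, hzs⟩
        simp only [Set.mem_setOf_eq, sub_zero]
        have hd : |MvPolynomial.eval z f - MvPolynomial.eval z g| ≤ ε :=
          eval_sub_abs_le r B hB f g (hWdeg k k') (hW'deg k k') z hzG
        simp only [Set.mem_setOf_eq, not_iff] at hzs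
        by_cases h1 : 0 ≤ MvPolynomial.eval z f
        · have h2 : ¬ (0 ≤ MvPolynomial.eval z g) := by tauto
          push_neg at h2
          calc |MvPolynomial.eval z f| = MvPolynomial.eval z f := abs_of_nonneg h1
            _ ≤ MvPolynomial.eval z f - MvPolynomial.eval z g := by linarith
            _ ≤ |MvPolynomial.eval z f - MvPolynomial.eval z g| := le_abs_self _
            _ ≤ ε := hd
        · have h2 : 0 ≤ MvPolynomial.eval z g := by tauto
          push_neg at h1
          calc |MvPolynomial.eval z f| = -(MvPolynomial.eval z f) := abs_of_neg h1
            _ ≤ MvPolynomial.eval z g - MvPolynomial.eval z f := by linarith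
            _ ≤ |MvPolynomial.eval z f - MvPolynomial.eval z g| := by
                rw [abs_sub_comm]; exact le_abs_self _
            _ ≤ ε := hd
      have hmono2 : (ν (E (k, k'))).toReal ≤
          (ν {z | |MvPolynomial.eval z f - 0| ≤ ε}).toReal := by
        apply ENNReal.toReal_mono (measure_ne_top ν _)
        exact measure_mono hsub2
      have hsm := hsmooth f (hWdeg k k') (hWcoeff k k' hkk') 0 ε hεpos
      have hεpow : ε ^ ((1 : ℝ) / r) / σpoly = (B / σpoly) * L ^ ((1 : ℝ) / r) := by
        rw [hε, Real.mul_rpow (le_of_lt hL0) (by positivity)]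
        rw [← Real.rpow_natCast B r, ← Real.rpow_mul (le_of_lt hB0)]
        rw [mul_one_div, div_self (by exact_mod_cast hr.ne')]
        rw [Real.rpow_one]
        ring
      calc (ν (E (k, k'))).toReal ≤ (ν {z | |MvPolynomial.eval z f - 0| ≤ ε}).toReal := hmono2
        _ ≤ ε ^ ((1 : ℝ) / r) / σpoly := hsm
        _ = (B / σpoly) * L ^ ((1 : ℝ) / r) := hεpow
  -- assemble
  have hfin : ∀ p ∈ S, ν (E p) ≠ ⊤ := fun p _ => measure_ne_top ν _
  calc (ν {z | tournamentWinner (polyScore W z) ≠ tournamentWinner (polyScore W' z)}).toReal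
      ≤ (∑ p ∈ S, ν (E p)).toReal :=
        ENNReal.toReal_mono (by exact (ENNReal.sum_lt_top.mpr
          (fun p hp => (measure_lt_top ν _))).ne) hmeas
    _ = ∑ p ∈ S, (ν (E p)).toReal := ENNReal.toReal_sum hfin
    _ ≤ ∑ p ∈ S, (B / σpoly) * (coeffL1Dist (W p.1 p.2) (W' p.1 p.2)) ^ ((1 : ℝ) / r) :=
        Finset.sum_le_sum hpair
    _ = (B / σpoly) * ∑ p ∈ S, (coeffL1Dist (W p.1 p.2) (W' p.1 p.2)) ^ ((1 : ℝ) / r) :=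
        (Finset.mul_sum _ _ _).symm
end

section
/- Counter-example separating directional and polynomial smoothness: let ν_d be the uniform distribution on the Euclidean unit ball in ℝ^d. Then (i) ν_d is σ_dir-directionally smooth with σ_dir = Ω(1/d); but (ii) for the degree-2 polynomial f(x) = ‖x‖₂²/d (which has coeff_2(f) = 1/√d up to normalization), concentration of measure gives P_{x∼ν_d}( |f(x) − 1/d·E‖x‖²·d| ≤ ε ) ≥ 1 − e^{−Ω(d)·ε}, so ν_d is σ_poly^{(2)}-polynomially smooth only with σ_poly^{(2)} exponentially small in d. -/
/-!
For the uniform probability `ν` on the unit ball of an `n`-dimensional space, `ν (ball 0 ρ) = ρⁿ`.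

(i) Writing `x = (⟪w, x⟫, y)` with `y ⊥ w` is volume preserving, so the slab `⟪w, x⟫ ∈ s` of the
unit ball has volume at most `|s| · vol Bⁿ⁻¹`, while the ball contains the cylinder
`(-a, a) × (1 - a) Bⁿ⁻¹`, whose volume is at least `a · vol Bⁿ⁻¹` for `a = 1 / 2n`. Hence the
density of `⟪w, x⟫` under `ν` is at most `2n`.

(ii) The mean of `‖x‖²` is `a² = n / (n + 2)`, and `aⁿ ≥ e⁻¹`. The annulus
`a (1 - δ/2) ≤ ‖x‖ < a` lies in `{|‖x‖² - a²| ≤ δ}` and has mass `aⁿ (1 - (1 - δ/2)ⁿ) ≥ δ / 6`.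
-/

open MeasureTheory Metric ProbabilityTheory Module Set
open scoped RealInnerProductSpace ENNReal

theorem Real.exp_neg_one_le_sqrt_div_add_two_pow {n : ℕ} (hn : n ≠ 0) :
    exp (-1) ≤ √(n / (n + 2)) ^ n := by
  have hn' : (0 : ℝ) < n := by positivity
  have hroot : exp (-1 / n) ≤ √(n / (n + 2)) := by
    rw [Real.le_sqrt (exp_pos _).le (by positivity), ← exp_nat_mul,
      show (2 : ℕ) * (-1 / n : ℝ) = -(2 / n) by push_cast; ring, exp_neg,
      show (n : ℝ) / (n + 2) = ((2 : ℝ) / n + 1)⁻¹ by field_simp; ring]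
    gcongr
    exact add_one_le_exp _
  calc exp (-1) = exp (-1 / n) ^ n := by rw [← exp_nat_mul]; field_simp
    _ ≤ √(n / (n + 2)) ^ n := by gcongr

section NormedSpace

variable {E : Type*} [NormedAddCommGroup E] [NormedSpace ℝ E] [FiniteDimensional ℝ E]
  [MeasurableSpace E] [BorelSpace E] [Nontrivial E] (μ : Measure E) [μ.IsAddHaarMeasure]

theorem cond_ball_apply_ball {ρ : ℝ} (hρ₀ : 0 ≤ ρ) (hρ₁ : ρ ≤ 1) :
    μ[ball 0 ρ | ball (0 : E) 1] = ENNReal.ofReal (ρ ^ finrank ℝ E) := by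
  rw [cond_apply measurableSet_ball, inter_eq_right.2 (ball_subset_ball hρ₁),
    μ.addHaar_ball _ hρ₀, mul_left_comm, ENNReal.inv_mul_cancel
    (measure_ball_pos μ _ one_pos).ne' measure_ball_lt_top.ne, mul_one]

theorem cond_ball_apply_ball_sdiff_ball {r R : ℝ} (hr : 0 ≤ r) (hrR : r ≤ R) (hR : R ≤ 1) :
    μ[ball 0 R \ ball 0 r | ball (0 : E) 1] =
      ENNReal.ofReal (R ^ finrank ℝ E - r ^ finrank ℝ E) := by
  rw [measure_sdiff (ball_subset_ball hrR) measurableSet_ball.nullMeasurableSet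
    (measure_ne_top _ _), cond_ball_apply_ball μ (hr.trans hrR) hR,
    cond_ball_apply_ball μ hr (hrR.trans hR), ENNReal.ofReal_sub _ (by positivity)]

theorem integral_norm_sq_cond_ball :
    ∫ x, ‖x‖ ^ 2 ∂μ[|ball (0 : E) 1] = finrank ℝ E / (finrank ℝ E + 2) := by
  have hn := finrank_pos (R := ℝ) (M := E)
  have hradial : ∫ x in ball (0 : E) 1, ‖x‖ ^ 2 ∂μ =
      ∫ x, (Iio (1 : ℝ)).indicator (· ^ 2) ‖x‖ ∂μ := by
    rw [← integral_indicator measurableSet_ball]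
    congr 1 with x
    by_cases hx : ‖x‖ < 1 <;> simp [hx, indicator]
  have hpolar : ∫ t in Ioi (0 : ℝ), t ^ (finrank ℝ E - 1) • (Iio (1 : ℝ)).indicator (· ^ 2) t =
      1 / (finrank ℝ E + 2) := by
    have hintegrand : ∀ t : ℝ, t ^ (finrank ℝ E - 1) • (Iio (1 : ℝ)).indicator (· ^ 2) t =
        (Iio (1 : ℝ)).indicator (· ^ (finrank ℝ E + 1)) t := by
      intro t
      by_cases ht : t < 1
      · simp only [mem_Iio, ht, indicator_of_mem, smul_eq_mul, ← pow_add]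
        congr 1
        omega
      · simp [ht]
    simp_rw [hintegrand]
    rw [setIntegral_indicator measurableSet_Iio, Ioi_inter_Iio, ← integral_Ioc_eq_integral_Ioo,
      ← intervalIntegral.integral_of_le zero_le_one, integral_pow]
    push_cast
    ring
  have hV := ENNReal.toReal_pos (measure_ball_pos μ (0 : E) one_pos).ne' measure_ball_lt_top.ne
  rw [ProbabilityTheory.cond, integral_smul_measure, hradial, integral_fun_norm_addHaar, hpolar,
    measureReal_def, ENNReal.toReal_inv, nsmul_eq_mul, smul_eq_mul, smul_eq_mul]
  field_simp

theorem ofReal_one_sub_exp_le_cond_ball_abs_norm_sq_sub_le {δ : ℝ} (hδ : 0 < δ) :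
    ENNReal.ofReal (1 - Real.exp (-(δ / 6))) ≤
      μ[{x | |‖x‖ ^ 2 - finrank ℝ E / (finrank ℝ E + 2)| ≤ δ} | ball (0 : E) 1] := by
  set n := finrank ℝ E
  have hn : n ≠ 0 := finrank_pos.ne'
  set a := √(n / (n + 2))
  have ha₀ : 0 ≤ a := Real.sqrt_nonneg _
  have ha_sq : a ^ 2 = n / (n + 2) := Real.sq_sqrt (by positivity)
  have ha_sq_le : a ^ 2 ≤ 1 := by rw [ha_sq, div_le_one (by positivity)]; linarith
  have ha₁ : a ≤ 1 := by nlinarith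
  rcases le_or_gt 1 δ with hδ₁ | hδ₁
  · calc ENNReal.ofReal (1 - Real.exp (-(δ / 6))) ≤ μ[ball 0 1 | ball (0 : E) 1] := by
          rw [cond_ball_apply_ball μ zero_le_one le_rfl, one_pow]
          exact ENNReal.ofReal_le_ofReal (by linarith [Real.exp_pos (-(δ / 6))])
      _ ≤ _ := by
          refine measure_mono fun x hx => ?_
          have hx : ‖x‖ < 1 := mem_ball_zero_iff.1 hx
          show |‖x‖ ^ 2 - _| ≤ δ
          rw [← ha_sq, abs_le]
          constructor <;> nlinarith [norm_nonneg x]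
  · set b := a * (1 - δ / 2)
    have hb₀ : 0 ≤ b := mul_nonneg ha₀ (by linarith)
    have hba : b ≤ a := mul_le_of_le_one_right ha₀ (by linarith)
    have hb_sq : a ^ 2 - δ ≤ b ^ 2 := by
      have hb_sq_eq : b ^ 2 = a ^ 2 - a ^ 2 * δ + (a * δ) ^ 2 / 4 := by simp only [b]; ring
      nlinarith [mul_le_mul_of_nonneg_right ha_sq_le hδ.le, sq_nonneg (a * δ)]
    calc ENNReal.ofReal (1 - Real.exp (-(δ / 6))) ≤ ENNReal.ofReal (a ^ n - b ^ n) := by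
          refine ENNReal.ofReal_le_ofReal ?_
          have he : (3 : ℝ)⁻¹ ≤ Real.exp (-1) := by
            rw [Real.exp_neg]
            exact inv_anti₀ (Real.exp_pos 1) (by linarith [Real.exp_one_lt_d9])
          have hpow : (1 - δ / 2) ^ n ≤ 1 - δ / 2 :=
            pow_le_of_le_one (by linarith) (by linarith) hn
          calc 1 - Real.exp (-(δ / 6)) ≤ δ / 6 := by linarith [Real.add_one_le_exp (-(δ / 6))]
            _ ≤ Real.exp (-1) * (δ / 2) := by nlinarith
            _ ≤ a ^ n * (δ / 2) := by gcongr; exact Real.exp_neg_one_le_sqrt_div_add_two_pow hn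
            _ ≤ a ^ n - b ^ n := by
              rw [mul_pow]
              nlinarith [pow_nonneg ha₀ n]
      _ = μ[ball 0 a \ ball 0 b | ball (0 : E) 1] := by
          rw [cond_ball_apply_ball_sdiff_ball μ hb₀ hba ha₁]
      _ ≤ _ := by
          refine measure_mono fun x ⟨hxa, hxb⟩ => ?_
          have hxa : ‖x‖ < a := mem_ball_zero_iff.1 hxa
          have hxb : b ≤ ‖x‖ := not_lt.1 (mt mem_ball_zero_iff.2 hxb)
          have : b ^ 2 ≤ ‖x‖ ^ 2 := by gcongr
          show |‖x‖ ^ 2 - _| ≤ δ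
          rw [← ha_sq, abs_le]
          constructor <;> nlinarith [norm_nonneg x]

end NormedSpace

section InnerProductSpace

variable {E : Type*} [NormedAddCommGroup E] [InnerProductSpace ℝ E] {w : E}

theorem norm_sq_eq_inner_sq_add_norm_sq_orthogonalProjection (hw : ‖w‖ = 1) (x : E) :
    ‖x‖ ^ 2 = ⟪w, x⟫ ^ 2 + ‖(ℝ ∙ w)ᗮ.orthogonalProjectionOnto x‖ ^ 2 := by
  rw [(ℝ ∙ w).norm_sq_eq_add_norm_sq_projection x, ← Submodule.norm_coe,
    ← Submodule.starProjection_apply, Submodule.starProjection_singleton, hw]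
  simp [norm_smul, hw]

variable [FiniteDimensional ℝ E] [MeasurableSpace E] [BorelSpace E]

theorem measurePreserving_inner_prod_orthogonalProjection (hw : ‖w‖ = 1) :
    MeasurePreserving (fun x => (⟪w, x⟫, (ℝ ∙ w)ᗮ.orthogonalProjectionOnto x)) := by
  let ι : ℝ ≃ₗᵢ[ℝ] ℝ ∙ w := .toSpanUnitSingleton w hw
  have hι : ∀ x, ι.symm ((ℝ ∙ w).orthogonalProjectionOnto x) = ⟪w, x⟫ := fun x => by
    rw [LinearIsometryEquiv.symm_apply_eq]
    ext
    simp [ι, Submodule.starProjection_singleton, hw]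
  let Ψ : E ≃ₗᵢ[ℝ] WithLp 2 (ℝ × (ℝ ∙ w)ᗮ) := (ℝ ∙ w).orthogonalDecomposition.trans
    (LinearIsometryEquiv.withLpProdCongr 2 ι.symm (LinearIsometryEquiv.refl ℝ _))
  convert (WithLp.volume_preserving_symm_measurableEquiv_toLp_prod ℝ (ℝ ∙ w)ᗮ).comp
    Ψ.measurePreserving using 1
  ext x <;> simp [Ψ, hι]

theorem volume_inner_preimage_inter_ball_le (hw : ‖w‖ = 1) {s : Set ℝ} (hs : MeasurableSet s) :
    volume ((⟪w, ·⟫) ⁻¹' s ∩ ball (0 : E) 1) ≤ volume s * volume (ball (0 : (ℝ ∙ w)ᗮ) 1) :=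
  calc volume ((⟪w, ·⟫) ⁻¹' s ∩ ball (0 : E) 1)
      ≤ volume ((fun x => (⟪w, x⟫, (ℝ ∙ w)ᗮ.orthogonalProjectionOnto x)) ⁻¹'
          (s ×ˢ ball 0 1)) := by
        refine measure_mono fun x hx => ?_
        simp only [mem_inter_iff, mem_preimage, mem_prod, mem_ball_zero_iff] at hx ⊢
        refine ⟨hx.1, ?_⟩
        have := norm_sq_eq_inner_sq_add_norm_sq_orthogonalProjection hw x
        nlinarith [norm_nonneg x, norm_nonneg ((ℝ ∙ w)ᗮ.orthogonalProjectionOnto x)]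
    _ = volume s * volume (ball (0 : (ℝ ∙ w)ᗮ) 1) := by
        rw [(measurePreserving_inner_prod_orthogonalProjection hw).measure_preimage
          (hs.prod measurableSet_ball).nullMeasurableSet, Measure.volume_eq_prod,
          Measure.prod_prod]

theorem volume_ball_orthogonal_le (hw : ‖w‖ = 1) :
    volume (ball (0 : (ℝ ∙ w)ᗮ) 1) ≤
      ENNReal.ofReal (2 * finrank ℝ E) * volume (ball (0 : E) 1) := by
  set m := finrank ℝ (ℝ ∙ w)ᗮ
  have hm : finrank ℝ E = m + 1 := by
    rw [← (ℝ ∙ w).finrank_add_finrank_orthogonal,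
      finrank_span_singleton (by rintro rfl; simp at hw), add_comm]
  set a : ℝ := 1 / (2 * (m + 1))
  have ha₀ : 0 < a := by positivity
  have ha : (m + 1) * a = 1 / 2 := by simp only [a]; field_simp
  have ha_le : a ≤ 1 / 2 := by nlinarith [(m.cast_nonneg : (0 : ℝ) ≤ m)]
  have hpow : 1 / 2 ≤ (1 - a) ^ m := by
    have := one_add_mul_le_pow (a := -a) (by linarith) m
    rw [← sub_eq_add_neg] at this
    linarith
  have hcylinder : ENNReal.ofReal a * volume (ball (0 : (ℝ ∙ w)ᗮ) 1) ≤ volume (ball (0 : E) 1) :=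
    calc ENNReal.ofReal a * volume (ball (0 : (ℝ ∙ w)ᗮ) 1)
        ≤ volume (ball (0 : ℝ) a) * volume (ball (0 : (ℝ ∙ w)ᗮ) (1 - a)) := by
          rw [Real.volume_ball, Measure.addHaar_ball_of_pos _ _ (r := 1 - a) (by linarith),
            ← mul_assoc, ← ENNReal.ofReal_mul (by positivity)]
          gcongr ?_ * _
          exact ENNReal.ofReal_le_ofReal (by nlinarith)
      _ = volume ((fun x => (⟪w, x⟫, (ℝ ∙ w)ᗮ.orthogonalProjectionOnto x)) ⁻¹'
            (ball 0 a ×ˢ ball 0 (1 - a))) := by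
          rw [(measurePreserving_inner_prod_orthogonalProjection hw).measure_preimage
            (measurableSet_ball.prod measurableSet_ball).nullMeasurableSet,
            Measure.volume_eq_prod, Measure.prod_prod]
      _ ≤ volume (ball (0 : E) 1) := by
          refine measure_mono fun x hx => ?_
          simp only [mem_preimage, mem_prod, mem_ball_zero_iff, Real.norm_eq_abs] at hx ⊢
          have h₁ : ⟪w, x⟫ ^ 2 < a ^ 2 := sq_lt_sq' (abs_lt.1 hx.1).1 (abs_lt.1 hx.1).2
          have h₂ : ‖(ℝ ∙ w)ᗮ.orthogonalProjectionOnto x‖ ^ 2 < (1 - a) ^ 2 := by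
            gcongr
            exact hx.2
          have := norm_sq_eq_inner_sq_add_norm_sq_orthogonalProjection hw x
          nlinarith [norm_nonneg x]
  calc volume (ball (0 : (ℝ ∙ w)ᗮ) 1)
      = ENNReal.ofReal (2 * finrank ℝ E) *
          (ENNReal.ofReal a * volume (ball (0 : (ℝ ∙ w)ᗮ) 1)) := by
        rw [← mul_assoc, ← ENNReal.ofReal_mul (by positivity), hm,
          show 2 * ((m + 1 : ℕ) : ℝ) * a = 1 by simp only [a]; push_cast; field_simp,
          ENNReal.ofReal_one, one_mul]
    _ ≤ ENNReal.ofReal (2 * finrank ℝ E) * volume (ball (0 : E) 1) := by gcongr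

theorem map_inner_cond_ball_le (hw : ‖w‖ = 1) {s : Set ℝ} (hs : MeasurableSet s) :
    (volume[|ball (0 : E) 1]).map (⟪w, ·⟫) s ≤ ENNReal.ofReal (2 * finrank ℝ E) * volume s := by
  have hV₀ : volume (ball (0 : E) 1) ≠ 0 := (measure_ball_pos _ _ one_pos).ne'
  have hV : volume (ball (0 : E) 1) ≠ ∞ := measure_ball_lt_top.ne
  rw [Measure.map_apply (by fun_prop) hs, cond_apply measurableSet_ball, inter_comm]
  calc (volume (ball (0 : E) 1))⁻¹ * volume ((⟪w, ·⟫) ⁻¹' s ∩ ball (0 : E) 1)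
      ≤ (volume (ball (0 : E) 1))⁻¹ *
          (volume s * (ENNReal.ofReal (2 * finrank ℝ E) * volume (ball (0 : E) 1))) := by
        gcongr
        exact (volume_inner_preimage_inter_ball_le hw hs).trans
          (by gcongr; exact volume_ball_orthogonal_le hw)
    _ = ENNReal.ofReal (2 * finrank ℝ E) * volume s := by
        rw [mul_comm, mul_assoc, mul_assoc, ENNReal.mul_inv_cancel hV₀ hV, mul_one, mul_comm]

end InnerProductSpace

/-- Counter-example separating directional and polynomial smoothness: the uniform
distribution `ν_d` on the Euclidean unit ball in `ℝᵈ` is (i) `σ_dir`-directionally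
smooth with `σ_dir = c/d = Ω(1/d)` (every unit-direction projection has density at
most `d/c`), while (ii) the degree-2 polynomial `f(x) = ‖x‖²/d` concentrates:
`ν_d(|f(x) − E f| ≤ ε) ≥ 1 − e^{−C·d·ε}`, so `ν_d` can only be
`σ_poly^{(2)}`-polynomially smooth with `σ_poly^{(2)}` exponentially small in `d`. -/
theorem uniform_ball_directionally_smooth_not_polynomially_smooth :
    ∃ c C : ℝ, 0 < c ∧ 0 < C ∧
      ∀ d : ℕ, 1 ≤ d →
        ∀ νd : Measure (EuclideanSpace ℝ (Fin d)),
          νd = (volume (ball (0 : EuclideanSpace ℝ (Fin d)) 1))⁻¹ •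
              volume.restrict (ball (0 : EuclideanSpace ℝ (Fin d)) 1) →
          -- (i) directional smoothness with σ_dir = c/d
          ((∀ w : EuclideanSpace ℝ (Fin d), ‖w‖ = 1 →
            ∀ s : Set ℝ, MeasurableSet s →
              Measure.map (fun x => ⟪w, x⟫) νd s ≤ ENNReal.ofReal (d / c) * volume s) ∧
          -- (ii) concentration of ‖x‖²/d, ruling out polynomial smoothness
          (∀ ε : ℝ, 0 < ε →
            ENNReal.ofReal (1 - Real.exp (-(C * d * ε))) ≤
              νd {x | |‖x‖ ^ 2 / d - ∫ y, ‖y‖ ^ 2 / d ∂νd| ≤ ε})) := by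
  refine ⟨1 / 2, 1 / 6, by norm_num, by norm_num, fun d hd νd hνd => ?_⟩
  have : Nonempty (Fin d) := ⟨⟨0, hd⟩⟩
  have hd₀ : (0 : ℝ) < d := by positivity
  change νd = volume[|ball 0 1] at hνd
  subst hνd
  refine ⟨fun w hw s hs => ?_, fun ε hε => ?_⟩
  · convert map_inner_cond_ball_le hw hs using 3
    rw [finrank_euclideanSpace_fin]
    ring
  · have hconc := ofReal_one_sub_exp_le_cond_ball_abs_norm_sq_sub_le
      (volume : Measure (EuclideanSpace ℝ (Fin d))) (δ := d * ε) (by positivity)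
    rw [finrank_euclideanSpace_fin] at hconc
    rw [integral_div, integral_norm_sq_cond_ball, finrank_euclideanSpace_fin]
    convert hconc using 3
    · congr 2
      ring
    · ext x
      rw [← sub_div, abs_div, abs_of_pos hd₀, div_le_iff₀ hd₀, mul_comm]
end
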